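/- arXiv:1811.01265 — 6 statements merged into one kernel-verified Lean document; each statement's English description precedes it below -/
import Mathlib

section
/- Let X be a quasi-Banach space, Z a p-norming set for X with constants C₁ and C₂, and Z₀ ⊆ Z. Suppose there is a constant C such that every x ∈ Z can be written as x = Σₙ aₙ xₙ (convergent in X) with (aₙ) ∈ ℓ_p, ‖(aₙ)‖_{ℓ_p} ≤ C, and xₙ ∈ Z₀. Then Z₀ is a p-norming set for X with constants C₁ and C·C₂. -/
/-!
Every `x ∈ Z` is a limit of finite sums `∑ aₙ xₙ` with `xₙ ∈ Z₀` and `∑ |aₙ|^p ≤ C^p`, and such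
sums lie in `C • co_p(Z₀)`. Hence `Z` lies in the closed absolutely `p`-convex set
`C • closure (co_p Z₀)`, and so does `closure (co_p Z)`, which gives
`B_X ⊆ C₂ • closure (co_p Z) ⊆ (C * C₂) • closure (co_p Z₀)`. The other inclusion is
monotonicity of `closure ∘ co_p`.
-/

open Pointwise

/-- The absolutely `p`-convex hull of `Z`: the smallest set containing `Z` that is
closed under combinations `a • x + b • y` with `|a|^p + |b|^p ≤ 1`. -/
def pConvexHull {X : Type*} [AddCommGroup X] [Module ℝ X] (p : ℝ) (Z : Set X) : Set X :=
  ⋂₀ { C | Z ⊆ C ∧ ∀ x ∈ C, ∀ y ∈ C, ∀ a b : ℝ, |a| ^ p + |b| ^ p ≤ 1 → a • x + b • y ∈ C }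

open Filter Topology

section PConvex

variable {X : Type*} [AddCommGroup X] [Module ℝ X]

def IsAbsPConvex (p : ℝ) (S : Set X) : Prop :=
  ∀ x ∈ S, ∀ y ∈ S, ∀ a b : ℝ, |a| ^ p + |b| ^ p ≤ 1 → a • x + b • y ∈ S

lemma subset_pConvexHull (p : ℝ) (Z : Set X) : Z ⊆ pConvexHull p Z :=
  fun _ hx => Set.mem_sInter.2 fun _ hS => hS.1 hx

lemma isAbsPConvex_pConvexHull (p : ℝ) (Z : Set X) : IsAbsPConvex p (pConvexHull p Z) :=
  fun x hx y hy a b hab => Set.mem_sInter.2 fun S hS => hS.2 x (hx S hS) y (hy S hS) a b hab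

lemma pConvexHull_subset {p : ℝ} {Z S : Set X} (hZS : Z ⊆ S) (hS : IsAbsPConvex p S) :
    pConvexHull p Z ⊆ S :=
  fun _ hx => Set.mem_sInter.1 hx S ⟨hZS, hS⟩

lemma pConvexHull_mono (p : ℝ) {Z₀ Z : Set X} (h : Z₀ ⊆ Z) :
    pConvexHull p Z₀ ⊆ pConvexHull p Z :=
  pConvexHull_subset (h.trans (subset_pConvexHull p Z)) (isAbsPConvex_pConvexHull p Z)

namespace IsAbsPConvex

variable {p : ℝ} {S : Set X}

lemma smul_set (hS : IsAbsPConvex p S) (c : ℝ) : IsAbsPConvex p (c • S) := by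
  rintro _ ⟨u, hu, rfl⟩ _ ⟨w, hw, rfl⟩ a b hab
  rw [smul_comm a c, smul_comm b c, ← smul_add]
  exact Set.smul_mem_smul_set (hS u hu w hw a b hab)

lemma zero_mem (hS : IsAbsPConvex p S) (hp : 0 < p) (hne : S.Nonempty) : (0 : X) ∈ S := by
  obtain ⟨x, hx⟩ := hne
  simpa using hS x hx x hx 0 0 (by simp [Real.zero_rpow hp.ne'])

/-- In the induction step the tail `∑ a j • v j` is `t • ∑ (a j / t) • v j` with
`t ^ p = ∑ |a j| ^ p`; if `t = 0` every `a j` vanishes, so the junk value `a j / 0` is harmless. -/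
lemma sum_smul_mem (hS : IsAbsPConvex p S) (hp : 0 < p) (hne : S.Nonempty)
    {ι : Type*} (s : Finset ι) (a : ι → ℝ) (v : ι → X) (hv : ∀ i ∈ s, v i ∈ S)
    (ha : ∑ i ∈ s, |a i| ^ p ≤ 1) : ∑ i ∈ s, a i • v i ∈ S := by
  classical
  induction s using Finset.induction generalizing a with
  | empty => simpa using hS.zero_mem hp hne
  | @insert i s his ih =>
    rw [Finset.sum_insert his] at ha ⊢
    set A := ∑ j ∈ s, |a j| ^ p
    have hA : 0 ≤ A := Finset.sum_nonneg fun j _ => by positivity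
    set t := A ^ p⁻¹
    have ht : 0 ≤ t := by positivity
    have htp : t ^ p = A := Real.rpow_inv_rpow hA hp.ne'
    have htail : ∑ j ∈ s, (a j / t) • v j ∈ S := by
      refine ih _ (fun j hj => hv j (Finset.mem_insert_of_mem hj)) ?_
      simp_rw [abs_div, Real.div_rpow (abs_nonneg _) (abs_nonneg _), abs_of_nonneg ht,
        ← Finset.sum_div, htp]
      exact div_self_le_one A
    have hcancel : ∀ j ∈ s, t * (a j / t) = a j := fun j hj =>
      (mul_div_assoc t (a j) t).symm.trans <| mul_div_cancel_left_of_imp fun ht0 => by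
        have hle : |a j| ^ p ≤ t ^ p :=
          htp ▸ Finset.single_le_sum (f := fun j => |a j| ^ p) (fun k _ => by positivity) hj
        rw [ht0, Real.zero_rpow hp.ne'] at hle
        exact abs_eq_zero.1 (Real.rpow_eq_zero (abs_nonneg _) hp.ne' |>.1
          (le_antisymm hle (by positivity)))
    have hmem := hS _ (hv i (Finset.mem_insert_self i s)) _ htail (a i) t
      (by rwa [abs_of_nonneg ht, htp])
    rwa [Finset.smul_sum, Finset.sum_congr rfl fun j hj => by rw [smul_smul, hcancel j hj]]
      at hmem

variable [TopologicalSpace X] [ContinuousAdd X] [ContinuousConstSMul ℝ X]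

lemma closure (hS : IsAbsPConvex p S) : IsAbsPConvex p (closure S) :=
  fun _ hx _ hy a b hab =>
    map_mem_closure₂ (f := fun x y : X => a • x + b • y) (by fun_prop) hx hy
      fun x hx y hy => hS x hx y hy a b hab

end IsAbsPConvex

lemma closure_pConvexHull_subset [TopologicalSpace X] {p : ℝ} {Z S : Set X} (hZS : Z ⊆ S)
    (hS : IsAbsPConvex p S) (hSc : IsClosed S) : closure (pConvexHull p Z) ⊆ S :=
  closure_minimal (pConvexHull_subset hZS hS) hSc

lemma tsum_rpow_le_of_rpow_one_div_le {p C : ℝ} (hp : 0 < p) {a : ℕ → ℝ}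
    (h : (∑' n, |a n| ^ p) ^ (1 / p) ≤ C) : ∑' n, |a n| ^ p ≤ C ^ p := by
  have hnn : 0 ≤ ∑' n, |a n| ^ p := tsum_nonneg fun n => by positivity
  rw [one_div] at h
  exact (Real.rpow_inv_le_iff_of_pos hnn ((Real.rpow_nonneg hnn _).trans h) hp).1 h

variable [TopologicalSpace X] [ContinuousConstSMul ℝ X]

lemma hasSum_mem_smul_closure_pConvexHull {p C : ℝ} (hp : 0 < p) (hC : 0 < C) {Z₀ : Set X}
    {a : ℕ → ℝ} {v : ℕ → X} {x : X} (hv : ∀ n, v n ∈ Z₀) (hx : HasSum (fun n => a n • v n) x)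
    (ha : Summable fun n => |a n| ^ p) (haC : (∑' n, |a n| ^ p) ^ (1 / p) ≤ C) :
    x ∈ C • closure (pConvexHull p Z₀) := by
  rw [Set.mem_smul_set_iff_inv_smul_mem₀ hC.ne']
  have hsum : HasSum (fun n => (C⁻¹ * a n) • v n) (C⁻¹ • x) := by
    simpa only [smul_smul] using hx.const_smul C⁻¹
  refine mem_closure_of_tendsto hsum.tendsto_sum_nat (Eventually.of_forall fun m => ?_)
  refine (isAbsPConvex_pConvexHull p Z₀).sum_smul_mem hp ⟨v 0, subset_pConvexHull p Z₀ (hv 0)⟩ _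
    _ v (fun n _ => subset_pConvexHull p Z₀ (hv n)) ?_
  have hCp : 0 < C ^ p := Real.rpow_pos_of_pos hC p
  calc ∑ n ∈ Finset.range m, |C⁻¹ * a n| ^ p
      = (∑ n ∈ Finset.range m, |a n| ^ p) / C ^ p := by
        simp_rw [abs_mul, abs_inv, abs_of_pos hC, Real.mul_rpow (inv_nonneg.2 hC.le)
          (abs_nonneg _), Real.inv_rpow hC.le, Finset.sum_div, inv_mul_eq_div]
    _ ≤ (∑' n, |a n| ^ p) / C ^ p := by
        gcongr
        exact ha.sum_le_tsum _ fun n _ => by positivity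
    _ ≤ 1 := div_le_one_of_le₀ (tsum_rpow_le_of_rpow_one_div_le hp haC) hCp.le

end PConvex

lemma continuousConstSMul_of_hasBasis {X : Type*} [AddCommGroup X] [Module ℝ X]
    [TopologicalSpace X] [IsTopologicalAddGroup X] (N : X → ℝ)
    (hNhom : ∀ (a : ℝ) (x : X), N (a • x) = |a| * N x)
    (hbasis : (𝓝 (0 : X)).HasBasis (fun ε : ℝ => 0 < ε) (fun ε => { x | N x < ε })) :
    ContinuousConstSMul ℝ X where
  continuous_const_smul c := by
    refine continuous_of_continuousAt_zero (DistribSMul.toAddMonoidHom X c) ?_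
    rw [ContinuousAt, map_zero, hbasis.tendsto_iff hbasis]
    refine fun ε hε => ⟨ε / (|c| + 1), by positivity, fun x hx => ?_⟩
    calc N (c • x) = |c| * N x := hNhom c x
      _ ≤ |c| * (ε / (|c| + 1)) := mul_le_mul_of_nonneg_left hx.le (abs_nonneg c)
      _ < ε := by
        rw [mul_div_assoc', div_lt_iff₀ (by positivity)]
        nlinarith [abs_nonneg c]

theorem pNorming_reduction_general {X : Type*} [AddCommGroup X] [Module ℝ X]
    [UniformSpace X] [IsUniformAddGroup X]
    (N : X → ℝ)
    (hNhom : ∀ (a : ℝ) (x : X), N (a • x) = |a| * N x)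
    (hbasis : (nhds (0 : X)).HasBasis (fun ε : ℝ => 0 < ε) (fun ε => { x | N x < ε }))
    (p : ℝ) (hp : 0 < p)
    (C₁ C₂ C : ℝ) (hC : 0 < C)
    (Z Z₀ : Set X) (hsub : Z₀ ⊆ Z)
    (hnorm₁ : C₁⁻¹ • closure (pConvexHull p Z) ⊆ { x | N x ≤ 1 })
    (hnorm₂ : { x | N x ≤ 1 } ⊆ C₂ • closure (pConvexHull p Z))
    (hdecomp : ∀ x ∈ Z, ∃ (a : ℕ → ℝ) (v : ℕ → X),
      (∀ n, v n ∈ Z₀) ∧ HasSum (fun n => a n • v n) x ∧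
      Summable (fun n => |a n| ^ p) ∧ (∑' n, |a n| ^ p) ^ (1 / p) ≤ C) :
    C₁⁻¹ • closure (pConvexHull p Z₀) ⊆ { x | N x ≤ 1 } ∧
    { x | N x ≤ 1 } ⊆ (C * C₂) • closure (pConvexHull p Z₀) := by
  have := continuousConstSMul_of_hasBasis N hNhom hbasis
  refine ⟨(Set.smul_set_mono (closure_mono (pConvexHull_mono p hsub))).trans hnorm₁, ?_⟩
  have hZ : Z ⊆ C • closure (pConvexHull p Z₀) := fun x hx => by
    obtain ⟨a, v, hv, hx, ha, haC⟩ := hdecomp x hx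
    exact hasSum_mem_smul_closure_pConvexHull hp hC hv hx ha haC
  have hclosure : closure (pConvexHull p Z) ⊆ C • closure (pConvexHull p Z₀) :=
    closure_pConvexHull_subset hZ ((isAbsPConvex_pConvexHull p Z₀).closure.smul_set C)
      (isClosed_closure.smul_of_ne_zero hC.ne')
  calc { x | N x ≤ 1 } ⊆ C₂ • closure (pConvexHull p Z) := hnorm₂
    _ ⊆ C₂ • C • closure (pConvexHull p Z₀) := Set.smul_set_mono hclosure
    _ = (C * C₂) • closure (pConvexHull p Z₀) := by rw [smul_smul, mul_comm]

/-- in a quasi-Banach space `X`, if `Z` is `p`-norming with constants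
`C₁`, `C₂`, `Z₀ ⊆ Z`, and every `x ∈ Z` can be written as `x = ∑ₙ aₙ xₙ`
(convergent in `X`) with `xₙ ∈ Z₀` and `‖(aₙ)‖_{ℓ_p} ≤ C`, then `Z₀` is
`p`-norming with constants `C₁` and `C·C₂`. -/
theorem pNorming_reduction {X : Type*} [AddCommGroup X] [Module ℝ X]
    [UniformSpace X] [IsUniformAddGroup X] [CompleteSpace X]
    (N : X → ℝ)
    (hNpos : ∀ x : X, x ≠ 0 → 0 < N x)
    (hNhom : ∀ (a : ℝ) (x : X), N (a • x) = |a| * N x)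
    (κ : ℝ) (hκ : 1 ≤ κ) (hNtri : ∀ x y : X, N (x + y) ≤ κ * (N x + N y))
    (hbasis : (nhds (0 : X)).HasBasis (fun ε : ℝ => 0 < ε) (fun ε => { x | N x < ε }))
    (p : ℝ) (hp : 0 < p) (hp1 : p ≤ 1)
    (C₁ C₂ C : ℝ) (hC₁ : 0 < C₁) (hC₂ : 0 < C₂) (hC : 0 < C)
    (Z Z₀ : Set X) (hsub : Z₀ ⊆ Z)
    (hnorm₁ : C₁⁻¹ • closure (pConvexHull p Z) ⊆ { x | N x ≤ 1 })
    (hnorm₂ : { x | N x ≤ 1 } ⊆ C₂ • closure (pConvexHull p Z))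
    (hdecomp : ∀ x ∈ Z, ∃ (a : ℕ → ℝ) (v : ℕ → X),
      (∀ n, v n ∈ Z₀) ∧ HasSum (fun n => a n • v n) x ∧
      Summable (fun n => |a n| ^ p) ∧ (∑' n, |a n| ^ p) ^ (1 / p) ≤ C) :
    C₁⁻¹ • closure (pConvexHull p Z₀) ⊆ { x | N x ≤ 1 } ∧
    { x | N x ≤ 1 } ⊆ (C * C₂) • closure (pConvexHull p Z₀) :=
  pNorming_reduction_general N hNhom hbasis p hp C₁ C₂ C hC Z Z₀ hsub hnorm₁ hnorm₂ hdecomp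
end

section
/- Let 0 < p ≤ 1 and let I ⊆ ℝ be an interval with base point a ∈ I. For x, y ∈ I define the step function atom f_{x,y} = χ_{(x,y]}/|y−x|^{1/p} for x < y. Then every step function f on I with ‖f‖_{L_p(I)} ≤ 1 can be written as a finite combination f = Σⱼ bⱼ fⱼ with each fⱼ of the form f_{x,y} and Σⱼ |bⱼ|^p ≤ 1; consequently the set of such atoms is isometrically p-norming in L_p(I). -/
/-!
The intervals `(xⱼ, xⱼ₊₁]` are disjoint, so `|f|^p` is the step function with values `|cⱼ|^p`
and `∫_I |f|^p = ∑ⱼ (xⱼ₊₁ - xⱼ) |cⱼ|^p`. Each block `cⱼ χ_(xⱼ, xⱼ₊₁]` is the multiple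
`bⱼ = cⱼ (xⱼ₊₁ - xⱼ)^{1/p}` of an atom, and `|bⱼ|^p = (xⱼ₊₁ - xⱼ) |cⱼ|^p`, hence
`∑ⱼ |bⱼ|^p = ‖f‖_p^p ≤ 1`.
-/

open MeasureTheory

lemma pairwiseDisjoint_Ioc_succ_of_monotoneOn {α : Type*} [Preorder α] {x : ℕ → α} {n : ℕ}
    (hx : MonotoneOn x (Set.Iic n)) :
    (Finset.range n : Set ℕ).PairwiseDisjoint fun j ↦ Set.Ioc (x j) (x (j + 1)) := by
  -- freezing `x` after `n` makes it monotone on all of `ℕ`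
  have hext : Monotone fun i ↦ x (min i n) := fun i j hij ↦
    hx (min_le_right i n) (min_le_right j n) (min_le_min_right n hij)
  intro i hi j hj hij
  simp only [Finset.coe_range, Set.mem_Iio] at hi hj
  have := hext.pairwise_disjoint_on_Ioc_succ hij
  simpa only [Function.onFun, Order.succ_eq_add_one, min_eq_left hi.le, min_eq_left hj.le,
    min_eq_left (show i + 1 ≤ n from hi), min_eq_left (show j + 1 ≤ n from hj)] using this

lemma Finset.map_sum_indicator_of_pairwiseDisjoint {ι α M N : Type*} [AddCommMonoid M]
    [AddCommMonoid N] {s : Finset ι} {A : ι → Set α} (hA : (s : Set ι).PairwiseDisjoint A)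
    {g : M → N} (hg : g 0 = 0) (c : ι → M) (t : α) :
    g (∑ j ∈ s, (A j).indicator (fun _ ↦ c j) t) = ∑ j ∈ s, (A j).indicator (fun _ ↦ g (c j)) t := by
  by_cases ht : ∃ j ∈ s, t ∈ A j
  · obtain ⟨j, hj, htj⟩ := ht
    have hother : ∀ i ∈ s, i ≠ j → t ∉ A i := fun i hi hij hti ↦
      Set.disjoint_left.mp (hA hi hj hij) hti htj
    rw [Finset.sum_eq_single_of_mem j hj fun i hi hij ↦ Set.indicator_of_notMem (hother i hi hij) _,
      Finset.sum_eq_single_of_mem j hj fun i hi hij ↦ Set.indicator_of_notMem (hother i hi hij) _,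
      Set.indicator_of_mem htj, Set.indicator_of_mem htj]
  · push Not at ht
    rw [Finset.sum_eq_zero fun j hj ↦ Set.indicator_of_notMem (ht j hj) _,
      Finset.sum_eq_zero fun j hj ↦ Set.indicator_of_notMem (ht j hj) _, hg]

lemma setIntegral_sum_indicator_const {ι α : Type*} [MeasurableSpace α] {μ : Measure α}
    {I : Set α} {s : Finset ι} {A : ι → Set α} (hAm : ∀ j ∈ s, MeasurableSet (A j))
    (hAI : ∀ j ∈ s, A j ⊆ I) (hAfin : ∀ j ∈ s, μ (A j) ≠ ⊤) (d : ι → ℝ) :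
    ∫ t in I, ∑ j ∈ s, (A j).indicator (fun _ ↦ d j) t ∂μ = ∑ j ∈ s, μ.real (A j) * d j := by
  have hrestrict : ∀ j ∈ s, μ.restrict I (A j) = μ (A j) := fun j hj ↦ by
    rw [Measure.restrict_apply (hAm j hj), Set.inter_eq_left.mpr (hAI j hj)]
  rw [integral_finsetSum _ fun j hj ↦ (integrable_indicator_iff (hAm j hj)).2
    (integrableOn_const (by rw [hrestrict j hj]; exact hAfin j hj))]
  refine Finset.sum_congr rfl fun j hj ↦ ?_
  rw [integral_indicator_const _ (hAm j hj), measureReal_def, hrestrict j hj, smul_eq_mul,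
    measureReal_def]

lemma setIntegral_rpow_abs_sum_indicator_Ioc {p : ℝ} (hp : p ≠ 0) {I : Set ℝ} {n : ℕ} {x : ℕ → ℝ}
    (hx : MonotoneOn x (Set.Iic n)) (hxI : ∀ j < n, Set.Ioc (x j) (x (j + 1)) ⊆ I) (c : ℕ → ℝ) :
    ∫ t in I, |∑ j ∈ Finset.range n, c j * (Set.Ioc (x j) (x (j + 1))).indicator 1 t| ^ p =
      ∑ j ∈ Finset.range n, (x (j + 1) - x j) * |c j| ^ p := by
  have hpt : ∀ t, |∑ j ∈ Finset.range n, c j * (Set.Ioc (x j) (x (j + 1))).indicator 1 t| ^ p =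
      ∑ j ∈ Finset.range n, (Set.Ioc (x j) (x (j + 1))).indicator (fun _ ↦ |c j| ^ p) t := by
    intro t
    simp_rw [← smul_eq_mul, Set.smul_indicator_one_apply]
    exact Finset.map_sum_indicator_of_pairwiseDisjoint (pairwiseDisjoint_Ioc_succ_of_monotoneOn hx)
      (g := fun y ↦ |y| ^ p) (by simp [Real.zero_rpow hp]) c t
  simp_rw [hpt]
  rw [setIntegral_sum_indicator_const (fun _ _ ↦ measurableSet_Ioc)
    (fun j hj ↦ hxI j (Finset.mem_range.mp hj)) (fun _ _ ↦ measure_Ioc_lt_top.ne)]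
  refine Finset.sum_congr rfl fun j hj ↦ ?_
  have hj : j < n := Finset.mem_range.mp hj
  rw [Real.volume_real_Ioc_of_le (hx (Set.mem_Iic.2 hj.le) (Set.mem_Iic.2 hj) (Nat.le_succ j))]

lemma abs_mul_rpow_one_div_rpow {p L : ℝ} (hp : p ≠ 0) (hL : 0 ≤ L) (c : ℝ) :
    |c * L ^ (1 / p)| ^ p = L * |c| ^ p := by
  have hL' : 0 ≤ L ^ (1 / p) := Real.rpow_nonneg hL _
  rw [abs_mul, abs_of_nonneg hL', Real.mul_rpow (abs_nonneg c) hL', one_div,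
    Real.rpow_inv_rpow hL hp, mul_comm]

theorem stepFunction_pConvex_decomposition_general (p : ℝ) (hp : 0 < p)
    (I : Set ℝ) (hI : Set.OrdConnected I)
    (n : ℕ) (x : ℕ → ℝ)
    (hmono : ∀ i < n, x i < x (i + 1)) (hxI : ∀ i ≤ n, x i ∈ I)
    (c : ℕ → ℝ) (f : ℝ → ℝ)
    (hf : ∀ t, f t = ∑ j ∈ Finset.range n,
      c j * Set.indicator (Set.Ioc (x j) (x (j + 1))) 1 t)
    (hnorm : (∫ t in I, |f t| ^ p) ^ (1 / p) ≤ 1) :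
    ∃ (m : ℕ) (b : Fin m → ℝ) (u v : Fin m → ℝ),
      (∀ i, u i ∈ I ∧ v i ∈ I ∧ u i < v i) ∧
      (∀ t, f t = ∑ i, b i * (((v i - u i) ^ (1 / p))⁻¹ *
        Set.indicator (Set.Ioc (u i) (v i)) 1 t)) ∧
      (∑ i, |b i| ^ p) ≤ 1 := by
  simp only [hf] at hnorm
  have hx : StrictMonoOn x (Set.Iic n) := strictMonoOn_Iic_of_lt_succ hmono
  have hlen : ∀ j < n, 0 < x (j + 1) - x j := fun j hj ↦ sub_pos.2 (hmono j hj)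
  have hsub : ∀ j < n, Set.Ioc (x j) (x (j + 1)) ⊆ I := fun j hj ↦
    Set.Ioc_subset_Icc_self.trans (hI.out (hxI j hj.le) (hxI (j + 1) hj))
  have hmass : ∑ j ∈ Finset.range n, (x (j + 1) - x j) * |c j| ^ p ≤ 1 := by
    rw [← setIntegral_rpow_abs_sum_indicator_Ioc hp.ne' hx.monotoneOn hsub c]
    have hA : 0 ≤ ∫ t in I,
        |∑ j ∈ Finset.range n, c j * (Set.Ioc (x j) (x (j + 1))).indicator 1 t| ^ p :=
      integral_nonneg fun t ↦ by positivity
    have := Real.rpow_le_rpow (Real.rpow_nonneg hA _) hnorm hp.le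
    rwa [one_div, Real.rpow_inv_rpow hA hp.ne', Real.one_rpow] at this
  refine ⟨n, fun j ↦ c j * (x (j + 1) - x j) ^ (1 / p), fun j ↦ x j, fun j ↦ x (j + 1),
    fun j ↦ ⟨hxI j j.2.le, hxI (j + 1) j.2, hmono j j.2⟩, fun t ↦ ?_, ?_⟩
  · rw [hf t, Finset.sum_range]
    refine Finset.sum_congr rfl fun j _ ↦ ?_
    have := (Real.rpow_pos_of_pos (hlen j j.2) (1 / p)).ne'
    field_simp
  · calc ∑ j : Fin n, |c j * (x (j + 1) - x j) ^ (1 / p)| ^ p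
        = ∑ j : Fin n, (x (j + 1) - x j) * |c j| ^ p :=
          Finset.sum_congr rfl fun j _ ↦ abs_mul_rpow_one_div_rpow hp.ne' (hlen j j.2).le _
      _ = ∑ j ∈ Finset.range n, (x (j + 1) - x j) * |c j| ^ p :=
          Fin.sum_univ_eq_sum_range (fun j ↦ (x (j + 1) - x j) * |c j| ^ p) n
      _ ≤ 1 := hmass

/-- let `0 < p ≤ 1` and let `I ⊆ ℝ` be an interval with a base point.
Every step function `f` on `I` with `‖f‖_{L_p(I)} ≤ 1` can be written as a finite
combination `f = ∑ⱼ bⱼ fⱼ` of the atoms `f_{u,v} = χ_{(u,v]}/(v−u)^{1/p}`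
(`u < v` in `I`) with `∑ⱼ |bⱼ|^p ≤ 1`. -/
theorem stepFunction_pConvex_decomposition (p : ℝ) (hp : 0 < p) (hp1 : p ≤ 1)
    (I : Set ℝ) (hI : Set.OrdConnected I) (a : ℝ) (ha : a ∈ I)
    (n : ℕ) (x : ℕ → ℝ)
    (hmono : ∀ i < n, x i < x (i + 1)) (hxI : ∀ i ≤ n, x i ∈ I)
    (c : ℕ → ℝ) (f : ℝ → ℝ)
    (hf : ∀ t, f t = ∑ j ∈ Finset.range n,
      c j * Set.indicator (Set.Ioc (x j) (x (j + 1))) 1 t)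
    (hnorm : (∫ t in I, |f t| ^ p) ^ (1 / p) ≤ 1) :
    ∃ (m : ℕ) (b : Fin m → ℝ) (u v : Fin m → ℝ),
      (∀ i, u i ∈ I ∧ v i ∈ I ∧ u i < v i) ∧
      (∀ t, f t = ∑ i, b i * (((v i - u i) ^ (1 / p))⁻¹ *
        Set.indicator (Set.Ioc (u i) (v i)) 1 t)) ∧
      (∑ i, |b i| ^ p) ≤ 1 :=
  stepFunction_pConvex_decomposition_general p hp I hI n x hmono hxI c f hf hnorm
end

section
/- For every d ∈ ℕ and every 0 < p ≤ 1 there exists a p-norm ‖·‖_{(p)} on ℝ^d such that: (a) ‖(x₁,…,x_d)‖_{(p)} = (Σⱼ xⱼ^p)^{1/p} whenever all xⱼ ≥ 0, and (b) ‖eᵢ − eⱼ‖_{(p)} ≤ 1 for all standard basis vectors eᵢ, eⱼ. -/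
/-!
The norm is `N x = max (‖x⁺‖_p, ‖x⁻‖_p)`, whose `p`-th power is `max (∑ (xⱼ⁺)^p, ∑ (xⱼ⁻)^p)`.
Each of the two sums is subadditive, because `t ↦ t⁺` is subadditive and `t ↦ t^p` is monotone
and subadditive on `[0, ∞)` for `p ≤ 1`; hence so is their maximum. On nonnegative vectors the
negative part vanishes, and each part of `eᵢ - eⱼ` is a single basis vector, so taking the maximum
instead of the sum of the two parts gives `‖eᵢ - eⱼ‖ ≤ 1`.
-/

open Finset

section

variable {ι : Type*} [Fintype ι] (p : ℝ)

noncomputable def posPartPowSum (x : ι → ℝ) : ℝ := ∑ j, (x j)⁺ ^ p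

noncomputable def maxPartPowSum (x : ι → ℝ) : ℝ := max (posPartPowSum p x) (posPartPowSum p (-x))

variable {p}

lemma posPartPowSum_nonneg (x : ι → ℝ) : 0 ≤ posPartPowSum p x :=
  sum_nonneg fun _ _ => Real.rpow_nonneg (posPart_nonneg _) p

lemma posPartPowSum_pos {x : ι → ℝ} {j : ι} (hj : 0 < x j) : 0 < posPartPowSum p x :=
  sum_pos' (fun _ _ => Real.rpow_nonneg (posPart_nonneg _) p)
    ⟨j, mem_univ j, Real.rpow_pos_of_pos (posPart_pos hj) p⟩

lemma posPartPowSum_mono (hp : 0 ≤ p) : Monotone (posPartPowSum (ι := ι) p) := fun _ _ hxy =>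
  sum_le_sum fun j _ => Real.rpow_le_rpow (posPart_nonneg _) (posPart_mono (hxy j)) hp

lemma posPartPowSum_add_le (hp : 0 ≤ p) (hp1 : p ≤ 1) (x y : ι → ℝ) :
    posPartPowSum p (x + y) ≤ posPartPowSum p x + posPartPowSum p y := by
  rw [posPartPowSum, posPartPowSum, posPartPowSum, ← sum_add_distrib]
  refine sum_le_sum fun j _ => ?_
  have hsub : (x j + y j)⁺ ≤ (x j)⁺ + (y j)⁺ :=
    sup_le (add_le_add (le_posPart _) (le_posPart _))
      (add_nonneg (posPart_nonneg _) (posPart_nonneg _))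
  calc (x j + y j)⁺ ^ p ≤ ((x j)⁺ + (y j)⁺) ^ p := Real.rpow_le_rpow (posPart_nonneg _) hsub hp
    _ ≤ (x j)⁺ ^ p + (y j)⁺ ^ p :=
      Real.rpow_add_le_add_rpow (posPart_nonneg _) (posPart_nonneg _) hp hp1

lemma posPartPowSum_smul {a : ℝ} (ha : 0 ≤ a) (x : ι → ℝ) :
    posPartPowSum p (a • x) = a ^ p * posPartPowSum p x := by
  rw [posPartPowSum, posPartPowSum, mul_sum]
  refine sum_congr rfl fun j _ => ?_
  have hpos : (a * x j)⁺ = a * (x j)⁺ := by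
    rw [posPart_def, posPart_def, mul_max_of_nonneg _ _ ha, mul_zero]
  rw [Pi.smul_apply, smul_eq_mul, hpos, Real.mul_rpow ha (posPart_nonneg _)]

lemma posPartPowSum_of_nonneg {x : ι → ℝ} (hx : 0 ≤ x) :
    posPartPowSum p x = ∑ j, x j ^ p :=
  sum_congr rfl fun j _ => by rw [posPart_eq_self.2 (hx j)]

lemma posPartPowSum_neg_of_nonneg (hp : p ≠ 0) {x : ι → ℝ} (hx : 0 ≤ x) :
    posPartPowSum p (-x) = 0 :=
  sum_eq_zero fun j _ => by
    rw [Pi.neg_apply, posPart_eq_zero.2 (neg_nonpos.2 (hx j)), Real.zero_rpow hp]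

lemma posPartPowSum_single_one [DecidableEq ι] (hp : p ≠ 0) (i : ι) :
    posPartPowSum p (Pi.single i (1 : ℝ)) = 1 := by
  rw [posPartPowSum_of_nonneg (Pi.single_nonneg.2 zero_le_one)]
  simp [Pi.single_apply, apply_ite (· ^ p), Real.zero_rpow hp]

lemma posPartPowSum_single_sub_single_le_one [DecidableEq ι] (hp : 0 < p) (i j : ι) :
    posPartPowSum p (Pi.single i (1 : ℝ) - Pi.single j 1) ≤ 1 :=
  calc posPartPowSum p (Pi.single i (1 : ℝ) - Pi.single j 1)
      ≤ posPartPowSum p (Pi.single i (1 : ℝ)) :=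
        posPartPowSum_mono hp.le (sub_le_self _ (Pi.single_nonneg.2 zero_le_one))
    _ = 1 := posPartPowSum_single_one hp.ne' i

lemma maxPartPowSum_nonneg (x : ι → ℝ) : 0 ≤ maxPartPowSum p x :=
  (posPartPowSum_nonneg x).trans (le_max_left _ _)

lemma maxPartPowSum_pos {x : ι → ℝ} (hx : x ≠ 0) : 0 < maxPartPowSum p x := by
  obtain ⟨j, hj⟩ := Function.ne_iff.1 hx
  rcases hj.lt_or_gt with hneg | hpos
  · exact (posPartPowSum_pos (x := -x) (neg_pos.2 hneg)).trans_le (le_max_right _ _)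
  · exact (posPartPowSum_pos hpos).trans_le (le_max_left _ _)

lemma maxPartPowSum_neg (x : ι → ℝ) : maxPartPowSum p (-x) = maxPartPowSum p x := by
  rw [maxPartPowSum, maxPartPowSum, neg_neg, max_comm]

lemma maxPartPowSum_smul_of_nonneg {a : ℝ} (ha : 0 ≤ a) (x : ι → ℝ) :
    maxPartPowSum p (a • x) = a ^ p * maxPartPowSum p x := by
  rw [maxPartPowSum, maxPartPowSum, ← smul_neg, posPartPowSum_smul ha, posPartPowSum_smul ha,
    mul_max_of_nonneg _ _ (Real.rpow_nonneg ha p)]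

lemma maxPartPowSum_smul (a : ℝ) (x : ι → ℝ) :
    maxPartPowSum p (a • x) = |a| ^ p * maxPartPowSum p x := by
  rcases le_total 0 a with ha | ha
  · rw [maxPartPowSum_smul_of_nonneg ha, abs_of_nonneg ha]
  · rw [← neg_smul_neg, maxPartPowSum_smul_of_nonneg (neg_nonneg.2 ha), maxPartPowSum_neg,
      abs_of_nonpos ha]

lemma maxPartPowSum_add_le (hp : 0 ≤ p) (hp1 : p ≤ 1) (x y : ι → ℝ) :
    maxPartPowSum p (x + y) ≤ maxPartPowSum p x + maxPartPowSum p y := by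
  refine max_le ?_ ?_
  · exact (posPartPowSum_add_le hp hp1 x y).trans (add_le_add (le_max_left _ _) (le_max_left _ _))
  · rw [neg_add]
    exact (posPartPowSum_add_le hp hp1 (-x) (-y)).trans
      (add_le_add (le_max_right _ _) (le_max_right _ _))

lemma maxPartPowSum_of_nonneg (hp : p ≠ 0) {x : ι → ℝ} (hx : 0 ≤ x) :
    maxPartPowSum p x = ∑ j, x j ^ p := by
  rw [maxPartPowSum, posPartPowSum_neg_of_nonneg hp hx, max_eq_left (posPartPowSum_nonneg x),
    posPartPowSum_of_nonneg hx]

lemma maxPartPowSum_single_sub_single_le_one [DecidableEq ι] (hp : 0 < p) (i j : ι) :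
    maxPartPowSum p (Pi.single i (1 : ℝ) - Pi.single j 1) ≤ 1 := by
  rw [maxPartPowSum, neg_sub]
  exact max_le (posPartPowSum_single_sub_single_le_one hp i j)
    (posPartPowSum_single_sub_single_le_one hp j i)

end

/-- for every `d ∈ ℕ` and `0 < p ≤ 1` there is a `p`-norm on `ℝ^d`
that agrees with the `ℓ_p` quasi-norm on vectors with nonnegative coordinates and
satisfies `‖eᵢ − eⱼ‖ ≤ 1` for all standard basis vectors. -/
theorem exists_pNorm_on_RealFin (d : ℕ) (p : ℝ) (hp : 0 < p) (hp1 : p ≤ 1) :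
    ∃ N : (Fin d → ℝ) → ℝ,
      (∀ x : Fin d → ℝ, x ≠ 0 → 0 < N x) ∧
      (∀ (a : ℝ) (x : Fin d → ℝ), N (a • x) = |a| * N x) ∧
      (∀ x y : Fin d → ℝ, N (x + y) ^ p ≤ N x ^ p + N y ^ p) ∧
      (∀ x : Fin d → ℝ, (∀ j, 0 ≤ x j) → N x = (∑ j, x j ^ p) ^ (1 / p)) ∧
      (∀ i j : Fin d, N (Pi.single i 1 - Pi.single j 1) ≤ 1) := by
  have hp0 : p ≠ 0 := hp.ne'
  have hN : ∀ x : Fin d → ℝ, (maxPartPowSum p x ^ (1 / p)) ^ p = maxPartPowSum p x := fun x => by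
    rw [one_div, Real.rpow_inv_rpow (maxPartPowSum_nonneg x) hp0]
  refine ⟨fun x => maxPartPowSum p x ^ (1 / p), fun x hx => ?_, fun a x => ?_, fun x y => ?_,
    fun x hx => ?_, fun i j => ?_⟩ <;> dsimp only
  · exact Real.rpow_pos_of_pos (maxPartPowSum_pos hx) _
  · rw [maxPartPowSum_smul, Real.mul_rpow (by positivity) (maxPartPowSum_nonneg x), one_div,
      Real.rpow_rpow_inv (abs_nonneg a) hp0]
  · rw [hN, hN, hN]
    exact maxPartPowSum_add_le hp.le hp1 x y
  · rw [maxPartPowSum_of_nonneg hp0 hx]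
  · exact Real.rpow_le_one (maxPartPowSum_nonneg _)
      (maxPartPowSum_single_sub_single_le_one hp i j) (by positivity)
end

section
/- Let d ∈ ℕ, 0 < p ≤ 1, and for each subset A ⊆ {1,…,d} define C_A = M_A(T_{Aᶜ,A}) as in the construction of the p-body (where M_A flips the signs of coordinates in A and T_{Aᶜ,A} is the positive p-convex hull of the rectangles Z_{i,j} = {a eᵢ + b eⱼ : 0 ≤ a,b ≤ 1} for i ∈ Aᶜ, j ∈ A, with appropriate degenerate cases). Then the union C_{(p)} = ⋃_{A ⊆ {1,…,d}} C_A is an absolutely p-convex subset of ℝ^d containing the ℓ_p unit ball and contained in the ℓ_∞ unit ball. -/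
open Classical

/-- The positive `p`-convex hull `co_p^+(Z)`: combinations `∑ λⱼ • vⱼ` with
`λⱼ ≥ 0`, `∑ λⱼ^p ≤ 1` and `vⱼ ∈ Z`. -/
noncomputable def posPHull (p : ℝ) {d : ℕ} (Z : Set (Fin d → ℝ)) : Set (Fin d → ℝ) :=
  { x | ∃ (k : ℕ) (l : Fin k → ℝ) (v : Fin k → (Fin d → ℝ)),
      (∀ j, 0 ≤ l j) ∧ (∑ j, l j ^ p) ≤ 1 ∧ (∀ j, v j ∈ Z) ∧ x = ∑ j, l j • v j }

/-- The rectangle `Z_{i,j} = { a eᵢ + b eⱼ : 0 ≤ a, b ≤ 1 }`. -/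
def Zrect {d : ℕ} (i j : Fin d) : Set (Fin d → ℝ) :=
  { x | ∃ a b : ℝ, 0 ≤ a ∧ a ≤ 1 ∧ 0 ≤ b ∧ b ≤ 1 ∧
      x = a • (Pi.single i (1 : ℝ) : Fin d → ℝ) + b • (Pi.single j (1 : ℝ) : Fin d → ℝ) }

/-- The body `T_{A,B}` with its degenerate cases. -/
noncomputable def Tset (p : ℝ) {d : ℕ} (A B : Set (Fin d)) : Set (Fin d → ℝ) :=
  if A = ∅ ∧ B = ∅ then {0}
  else if B = ∅ then posPHull p { x | ∃ i ∈ A, x = (Pi.single i (1 : ℝ) : Fin d → ℝ) }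
  else if A = ∅ then posPHull p { x | ∃ j ∈ B, x = (Pi.single j (1 : ℝ) : Fin d → ℝ) }
  else posPHull p (⋃ i ∈ A, ⋃ j ∈ B, Zrect i j)

/-- `M_A` flips the signs of the coordinates in `A`. -/
noncomputable def MA {d : ℕ} (A : Set (Fin d)) (x : Fin d → ℝ) : Fin d → ℝ :=
  fun j => if j ∈ A then -x j else x j

/-- `C_A = M_A(T_{Aᶜ, A})`. -/
noncomputable def Cset (p : ℝ) {d : ℕ} (A : Set (Fin d)) : Set (Fin d → ℝ) :=
  MA A '' Tset p Aᶜ A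

/-- `C_{(p)} = ⋃_A C_A`. -/
noncomputable def Cp (p : ℝ) (d : ℕ) : Set (Fin d → ℝ) :=
  ⋃ A : Set (Fin d), Cset p A

/-!
Every generator of `T_{Aᶜ,A}` is sent by `M_A` to a vector `a eᵢ - b eⱼ` with `0 ≤ a, b ≤ 1`,
so `C_(p)` lies in the positive `p`-convex hull `H` of these vectors. Conversely, for `z ∈ H`
let `D` be the set of its negative coordinates: `M_D z = |z|` is dominated coordinatewise by an
element of `T_{Dᶜ,D}`, obtained by dropping the wrongly signed half of each generator, and
`T_{Dᶜ,D}` is solid in the positive orthant, so `z ∈ C_D`. Thus `C_(p) = H`. Since the generators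
form a symmetric subset of the `ℓ_∞` ball containing `± eᵢ`, `H` is absolutely `p`-convex, contains
the `ℓ_p` ball, and (because `∑ λⱼ ≤ ∑ λⱼ^p ≤ 1` for `p ≤ 1`) lies in the `ℓ_∞` ball.
-/

open Set Finset

section

variable {p : ℝ} {d : ℕ}

section posPHull

variable {S S' : Set (Fin d → ℝ)} {x y : Fin d → ℝ}

lemma zero_mem_posPHull (S : Set (Fin d → ℝ)) : (0 : Fin d → ℝ) ∈ posPHull p S :=
  ⟨0, Fin.elim0, Fin.elim0, Fin.rec0, by simp, Fin.rec0, by simp⟩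

lemma posPHull_mono (h : S ⊆ S') : posPHull p S ⊆ posPHull p S' :=
  fun _ ⟨k, l, v, hl, hlp, hv, hx⟩ => ⟨k, l, v, hl, hlp, fun j => h (hv j), hx⟩

lemma image_posPHull_subset {d' : ℕ} (f : (Fin d → ℝ) →ₗ[ℝ] Fin d' → ℝ) :
    f '' posPHull p S ⊆ posPHull p (f '' S) := by
  rintro _ ⟨_, ⟨k, l, v, hl, hlp, hv, rfl⟩, rfl⟩
  exact ⟨k, l, f ∘ v, hl, hlp, fun j => mem_image_of_mem f (hv j), by simp⟩

lemma neg_mem_posPHull (hS : ∀ v ∈ S, -v ∈ S) (hx : x ∈ posPHull p S) :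
    -x ∈ posPHull p S := by
  obtain ⟨k, l, v, hl, hlp, hv, rfl⟩ := hx
  exact ⟨k, l, -v, hl, hlp, fun j => hS _ (hv j), by simp⟩

lemma smul_add_smul_mem_posPHull (hx : x ∈ posPHull p S) (hy : y ∈ posPHull p S) {a b : ℝ}
    (ha : 0 ≤ a) (hb : 0 ≤ b) (hab : a ^ p + b ^ p ≤ 1) : a • x + b • y ∈ posPHull p S := by
  obtain ⟨k, l, v, hl, hlp, hv, rfl⟩ := hx
  obtain ⟨k', l', v', hl', hlp', hv', rfl⟩ := hy
  refine ⟨k + k', Fin.append (a • l) (b • l'), Fin.append v v', ?_, ?_, ?_, ?_⟩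
  · exact Fin.addCases (fun j => by simpa using mul_nonneg ha (hl j))
      (fun j => by simpa using mul_nonneg hb (hl' j))
  · have hsum : ∀ {n} (c : ℝ) (hc : 0 ≤ c) (m : Fin n → ℝ) (hm : ∀ j, 0 ≤ m j),
        ∑ j, (c * m j) ^ p = c ^ p * ∑ j, m j ^ p := fun c hc m hm => by
      rw [Finset.mul_sum]; exact sum_congr rfl fun j _ => Real.mul_rpow hc (hm j)
    simp only [Fin.sum_univ_add, Fin.append_left, Fin.append_right, Pi.smul_apply, smul_eq_mul,
      hsum a ha l hl, hsum b hb l' hl']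
    calc a ^ p * ∑ j, l j ^ p + b ^ p * ∑ j, l' j ^ p ≤ a ^ p * 1 + b ^ p * 1 := by
          gcongr
      _ ≤ 1 := by simpa using hab
  · exact Fin.addCases (fun j => by simpa using hv j) (fun j => by simpa using hv' j)
  · simp [Fin.sum_univ_add, Finset.smul_sum, mul_smul]

lemma smul_add_smul_mem_posPHull_of_neg_mem (hS : ∀ v ∈ S, -v ∈ S) (hx : x ∈ posPHull p S)
    (hy : y ∈ posPHull p S) {a b : ℝ} (hab : |a| ^ p + |b| ^ p ≤ 1) :
    a • x + b • y ∈ posPHull p S := by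
  have hsign : ∀ (c : ℝ) {x}, x ∈ posPHull p S → ∃ x' ∈ posPHull p S, c • x = |c| • x' := by
    intro c x hx
    rcases le_total 0 c with hc | hc
    · exact ⟨x, hx, by rw [abs_of_nonneg hc]⟩
    · exact ⟨-x, neg_mem_posPHull hS hx, by rw [abs_of_nonpos hc, neg_smul_neg]⟩
  obtain ⟨x', hx', hax⟩ := hsign a hx
  obtain ⟨y', hy', hby⟩ := hsign b hy
  rw [hax, hby]
  exact smul_add_smul_mem_posPHull hx' hy' (abs_nonneg a) (abs_nonneg b) hab

lemma exists_mem_posPHull_ge (h : ∀ v ∈ S, ∃ w ∈ S', v ≤ w) (hx : x ∈ posPHull p S) :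
    ∃ y ∈ posPHull p S', x ≤ y := by
  obtain ⟨k, l, v, hl, hlp, hv, rfl⟩ := hx
  choose w hw hvw using fun j => h (v j) (hv j)
  exact ⟨_, ⟨k, l, w, hl, hlp, hw, rfl⟩,
    sum_le_sum fun j _ => smul_le_smul_of_nonneg_left (hvw j) (hl j)⟩

def IsSolidUpToScaling (S : Set (Fin d → ℝ)) : Prop :=
  ∀ w ∈ S, ∀ θ : Fin d → ℝ, 0 ≤ θ → θ ≤ 1 → ∃ c ∈ Set.Icc (0 : ℝ) 1, ∃ w' ∈ S, θ * w = c • w'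

lemma mem_posPHull_of_le (hp : 0 ≤ p) (hS : IsSolidUpToScaling S) (hy : y ∈ posPHull p S)
    (hx0 : 0 ≤ x) (hxy : x ≤ y) : x ∈ posPHull p S := by
  obtain ⟨k, l, w, hl, hlp, hw, rfl⟩ := hy
  set y := ∑ j, l j • w j
  have hy0 : 0 ≤ y := hx0.trans hxy
  -- where `y m = 0` also `x m = 0`, and `0 / 0 = 0` keeps `θ m` in `[0, 1]`
  set θ := x / y
  have hθx : θ * y = x := by
    funext m
    rcases (hy0 m).eq_or_lt with h | h
    · have hxm : x m = 0 := le_antisymm ((hxy m).trans_eq h.symm) (hx0 m)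
      simp [θ, ← h, hxm]
    · exact div_mul_cancel₀ _ h.ne'
  choose c hc w' hw' hθw using fun j => hS (w j) (hw j) θ (fun m => div_nonneg (hx0 m) (hy0 m))
    (fun m => div_le_one_of_le₀ (hxy m) (hy0 m))
  refine ⟨k, l * c, w', fun j => mul_nonneg (hl j) (hc j).1, ?_, hw', ?_⟩
  · refine (sum_le_sum fun j _ => ?_).trans hlp
    exact Real.rpow_le_rpow (mul_nonneg (hl j) (hc j).1)
      (mul_le_of_le_one_right (hl j) (hc j).2) hp
  · simp only [← hθx, y, Finset.mul_sum, mul_smul_comm, hθw, smul_smul, Pi.mul_apply]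

lemma sum_le_one_of_sum_rpow_le_one {ι : Type*} {s : Finset ι} {l : ι → ℝ} (hp : 0 < p)
    (hp1 : p ≤ 1) (hl : ∀ j ∈ s, 0 ≤ l j) (hlp : ∑ j ∈ s, l j ^ p ≤ 1) : ∑ j ∈ s, l j ≤ 1 := by
  refine (sum_le_sum fun j hj => Real.self_le_rpow_of_le_one (hl j hj) ?_ hp1).trans hlp
  by_contra! h
  exact (Real.one_lt_rpow h hp).not_ge
    ((single_le_sum (fun i hi => Real.rpow_nonneg (hl i hi) p) hj).trans hlp)

lemma abs_apply_le_one_of_mem_posPHull (hp : 0 < p) (hp1 : p ≤ 1)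
    (hS : ∀ v ∈ S, ∀ m, |v m| ≤ 1) (hx : x ∈ posPHull p S) (m : Fin d) : |x m| ≤ 1 := by
  obtain ⟨k, l, v, hl, hlp, hv, rfl⟩ := hx
  calc |(∑ j, l j • v j) m| = |∑ j, l j * v j m| := by simp
    _ ≤ ∑ j, |l j * v j m| := abs_sum_le_sum_abs _ _
    _ ≤ ∑ j, l j := sum_le_sum fun j _ => by
        rw [abs_mul, abs_of_nonneg (hl j)]
        exact mul_le_of_le_one_right (hl j) (hS _ (hv j) m)
    _ ≤ 1 := sum_le_one_of_sum_rpow_le_one hp hp1 (fun j _ => hl j) hlp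

end posPHull

section signFlip

variable {D : Set (Fin d)}

noncomputable def MAₗ (D : Set (Fin d)) : (Fin d → ℝ) →ₗ[ℝ] Fin d → ℝ where
  toFun := MA D
  map_add' x y := by funext j; simp only [MA, Pi.add_apply]; split_ifs <;> ring
  map_smul' c x := by
    funext j; simp only [MA, Pi.smul_apply, smul_eq_mul, RingHom.id_apply]; split_ifs <;> ring

@[simp] lemma MAₗ_apply (x : Fin d → ℝ) : MAₗ D x = MA D x := rfl

@[simp] lemma MA_MA (x : Fin d → ℝ) : MA D (MA D x) = x := by
  funext m; by_cases h : m ∈ D <;> simp [MA, h]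

lemma MA_single (i : Fin d) (c : ℝ) :
    MA D (Pi.single i c) = Pi.single i (if i ∈ D then -c else c) := by
  funext m
  by_cases hm : m = i
  · subst hm; simp [MA]
  · simp [MA, hm]

lemma MA_empty (x : Fin d → ℝ) : MA ∅ x = x := by
  funext m; simp [MA]

lemma MA_univ (x : Fin d → ℝ) : MA univ x = -x := by
  funext m; simp [MA]

lemma MA_setOf_neg (z : Fin d → ℝ) : MA {m | z m < 0} z = |z| := by
  funext m
  by_cases h : z m < 0
  · simp [MA, h, abs_of_neg h]
  · simp [MA, h, abs_of_nonneg (not_lt.mp h)]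

end signFlip

def signedPairs (d : ℕ) : Set (Fin d → ℝ) :=
  {v | ∃ (i j : Fin d) (a b : ℝ), a ∈ Set.Icc 0 1 ∧ b ∈ Set.Icc 0 1 ∧
    v = Pi.single i a - Pi.single j b}

section signedPairs

variable {v : Fin d → ℝ}

lemma neg_mem_signedPairs (hv : v ∈ signedPairs d) : -v ∈ signedPairs d := by
  obtain ⟨i, j, a, b, ha, hb, rfl⟩ := hv
  exact ⟨j, i, b, a, hb, ha, by abel⟩

lemma single_mem_signedPairs (i : Fin d) {c : ℝ} (hc : |c| ≤ 1) :
    Pi.single i c ∈ signedPairs d := by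
  rcases le_total 0 c with h | h
  · exact ⟨i, i, c, 0, ⟨h, (le_abs_self c).trans hc⟩, ⟨le_rfl, zero_le_one⟩, by simp⟩
  · exact ⟨i, i, 0, -c, ⟨le_rfl, zero_le_one⟩, ⟨neg_nonneg.2 h, (neg_le_abs c).trans hc⟩,
      by simp [Pi.single_neg]⟩

lemma abs_apply_le_one_of_mem_signedPairs (hv : v ∈ signedPairs d) (m : Fin d) : |v m| ≤ 1 := by
  obtain ⟨i, j, a, b, ⟨ha0, ha1⟩, ⟨hb0, hb1⟩, rfl⟩ := hv
  simp only [Pi.sub_apply, Pi.single_apply]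
  apply abs_sub_le_of_nonneg_of_le <;> split_ifs <;> linarith

lemma exists_le_single_of_mem_signedPairs (hv : v ∈ signedPairs d) :
    ∃ i, v ≤ Pi.single i 1 := by
  obtain ⟨i, j, a, b, ⟨-, ha1⟩, ⟨hb0, -⟩, rfl⟩ := hv
  exact ⟨i, (sub_le_self _ (Pi.single_nonneg.2 hb0)).trans (Pi.single_mono i ha1)⟩

lemma single_add_single_mem_Zrect {i j : Fin d} {a b : ℝ} (ha : a ∈ Set.Icc 0 1)
    (hb : b ∈ Set.Icc 0 1) :
    Pi.single i a + Pi.single j b ∈ Zrect i j :=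
  ⟨a, b, ha.1, ha.2, hb.1, hb.2, by simp [← Pi.single_smul']⟩

lemma exists_single_le_single {B : Set (Fin d)} (hB : B.Nonempty) {i : Fin d} {c : ℝ}
    (hc : c ≤ 1) (hc0 : i ∉ B → c ≤ 0) :
    ∃ i' ∈ B, ∃ a ∈ Set.Icc (0 : ℝ) 1, (Pi.single i c : Fin d → ℝ) ≤ Pi.single i' a := by
  by_cases hi : i ∈ B
  · exact ⟨i, hi, max c 0, ⟨le_max_right _ _, max_le hc zero_le_one⟩,
      Pi.single_mono i (le_max_left _ _)⟩
  · obtain ⟨i', hi'⟩ := hB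
    exact ⟨i', hi', 0, ⟨le_rfl, zero_le_one⟩, by simpa using hc0 hi⟩

lemma exists_mem_Zrect_ge_MA {D : Set (Fin d)} (hDc : Dᶜ.Nonempty) (hD : D.Nonempty)
    (hv : v ∈ signedPairs d) : ∃ w ∈ ⋃ i ∈ Dᶜ, ⋃ j ∈ D, Zrect i j, MA D v ≤ w := by
  obtain ⟨i, j, a, b, ha, hb, rfl⟩ := hv
  obtain ⟨i', hi', a', ha', hi⟩ := exists_single_le_single (c := if i ∈ D then -a else a) hDc
    (by split_ifs <;> linarith [ha.1, ha.2])
    (fun h => by rw [if_pos (Set.notMem_compl_iff.1 h)]; linarith [ha.1])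
  obtain ⟨j', hj', b', hb', hj⟩ := exists_single_le_single (c := if j ∈ D then b else -b) hD
    (by split_ifs <;> linarith [hb.1, hb.2]) (fun h => by rw [if_neg h]; linarith [hb.1])
  have hMA : MA D (Pi.single i a - Pi.single j b) =
      Pi.single i (if i ∈ D then -a else a) + Pi.single j (if j ∈ D then b else -b) := by
    rw [← MAₗ_apply, map_sub, MAₗ_apply, MAₗ_apply, MA_single, MA_single, sub_eq_add_neg,
      ← Pi.single_neg]
    congr 2
    split_ifs <;> simp
  exact ⟨_, mem_iUnion₂.2 ⟨i', hi', mem_iUnion₂.2 ⟨j', hj', single_add_single_mem_Zrect ha' hb'⟩⟩,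
    hMA ▸ add_le_add hi hj⟩

end signedPairs

section Tset

lemma mul_single_one (θ : Fin d → ℝ) (i : Fin d) :
    θ * Pi.single i 1 = θ i • (Pi.single i 1 : Fin d → ℝ) := by
  rw [← Pi.single_mul_right, ← Pi.single_smul', smul_eq_mul]

lemma isSolidUpToScaling_singles (A : Set (Fin d)) :
    IsSolidUpToScaling {x : Fin d → ℝ | ∃ i ∈ A, x = Pi.single i 1} := by
  rintro _ ⟨i, hi, rfl⟩ θ hθ0 hθ1
  exact ⟨θ i, ⟨hθ0 i, hθ1 i⟩, _, ⟨i, hi, rfl⟩, mul_single_one θ i⟩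

lemma isSolidUpToScaling_Zrect (A B : Set (Fin d)) :
    IsSolidUpToScaling (⋃ i ∈ A, ⋃ j ∈ B, Zrect i j) := by
  intro w hw θ hθ0 hθ1
  simp only [mem_iUnion] at hw
  obtain ⟨i, hi, j, hj, a, b, ha0, ha1, hb0, hb1, rfl⟩ := hw
  refine ⟨1, ⟨zero_le_one, le_rfl⟩, _, mem_iUnion₂.2 ⟨i, hi, mem_iUnion₂.2 ⟨j, hj, θ i * a, θ j * b,
    mul_nonneg (hθ0 i) ha0, mul_le_one₀ (hθ1 i) ha0 ha1, mul_nonneg (hθ0 j) hb0,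
    mul_le_one₀ (hθ1 j) hb0 hb1, rfl⟩⟩, ?_⟩
  rw [one_smul, mul_add, mul_smul_comm, mul_smul_comm, mul_single_one, mul_single_one, smul_smul,
    smul_smul, mul_comm a, mul_comm b]

lemma Cset_subset_posPHull_signedPairs (A : Set (Fin d)) :
    Cset p A ⊆ posPHull p (signedPairs d) := by
  have hsingles : ∀ B : Set (Fin d),
      MA A '' {x : Fin d → ℝ | ∃ i ∈ B, x = Pi.single i 1} ⊆ signedPairs d := by
    rintro B _ ⟨_, ⟨i, -, rfl⟩, rfl⟩
    rw [MA_single]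
    exact single_mem_signedPairs i (by split_ifs <;> simp)
  have hrects : MA A '' (⋃ i ∈ Aᶜ, ⋃ j ∈ A, Zrect i j) ⊆ signedPairs d := by
    rintro _ ⟨_, hw, rfl⟩
    simp only [mem_iUnion] at hw
    obtain ⟨i, hi, j, hj, a, b, ha0, ha1, hb0, hb1, rfl⟩ := hw
    refine ⟨i, j, a, b, ⟨ha0, ha1⟩, ⟨hb0, hb1⟩, ?_⟩
    rw [← Pi.single_smul', ← Pi.single_smul', ← MAₗ_apply, map_add, MAₗ_apply, MAₗ_apply,
      MA_single, MA_single, if_neg hi, if_pos hj]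
    simp [sub_eq_add_neg, Pi.single_neg]
  rintro _ ⟨t, ht, rfl⟩
  unfold Tset at ht
  split_ifs at ht
  · rw [mem_singleton_iff.1 ht, ← MAₗ_apply, map_zero]
    exact zero_mem_posPHull _
  · exact posPHull_mono (hsingles _) (image_posPHull_subset (MAₗ A) ⟨t, ht, rfl⟩)
  · exact posPHull_mono (hsingles _) (image_posPHull_subset (MAₗ A) ⟨t, ht, rfl⟩)
  · exact posPHull_mono hrects (image_posPHull_subset (MAₗ A) ⟨t, ht, rfl⟩)

lemma mem_posPHull_of_dominated {S S' : Set (Fin d → ℝ)} {x : Fin d → ℝ} (hp : 0 ≤ p)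
    (hS' : IsSolidUpToScaling S') (h : ∀ v ∈ S, ∃ w ∈ S', v ≤ w) (hx : x ∈ posPHull p S)
    (hx0 : 0 ≤ x) : x ∈ posPHull p S' :=
  let ⟨_, hy, hxy⟩ := exists_mem_posPHull_ge h hx
  mem_posPHull_of_le hp hS' hy hx0 hxy

lemma MA_mem_Tset_compl (hp : 0 ≤ p) {D : Set (Fin d)} {z : Fin d → ℝ}
    (hz : z ∈ posPHull p (signedPairs d)) (hz0 : 0 ≤ MA D z) : MA D z ∈ Tset p Dᶜ D := by
  have hMAz : MA D z ∈ posPHull p (MA D '' signedPairs d) :=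
    image_posPHull_subset (MAₗ D) ⟨z, hz, rfl⟩
  unfold Tset
  split_ifs with h0 hD hDc
  · obtain ⟨hDc, rfl⟩ := h0
    rw [compl_empty, univ_eq_empty_iff] at hDc
    exact Subsingleton.elim _ _
  · subst hD
    refine mem_posPHull_of_dominated hp (isSolidUpToScaling_singles _) ?_ hMAz hz0
    rintro _ ⟨v, hv, rfl⟩
    obtain ⟨i, hi⟩ := exists_le_single_of_mem_signedPairs hv
    exact ⟨_, ⟨i, notMem_empty i, rfl⟩, by rwa [MA_empty]⟩
  · rw [compl_empty_iff] at hDc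
    subst hDc
    refine mem_posPHull_of_dominated hp (isSolidUpToScaling_singles _) ?_ hMAz hz0
    rintro _ ⟨v, hv, rfl⟩
    obtain ⟨j, hj⟩ := exists_le_single_of_mem_signedPairs (neg_mem_signedPairs hv)
    exact ⟨_, ⟨j, mem_univ j, rfl⟩, by rwa [MA_univ]⟩
  · refine mem_posPHull_of_dominated hp (isSolidUpToScaling_Zrect _ _) ?_ hMAz hz0
    rintro _ ⟨v, hv, rfl⟩
    exact exists_mem_Zrect_ge_MA (nonempty_iff_ne_empty.2 hDc) (nonempty_iff_ne_empty.2 hD) hv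

end Tset

lemma Cp_eq_posPHull_signedPairs (hp : 0 ≤ p) : Cp p d = posPHull p (signedPairs d) := by
  refine Subset.antisymm (iUnion_subset Cset_subset_posPHull_signedPairs) fun z hz => ?_
  have hz0 : 0 ≤ MA {m | z m < 0} z := MA_setOf_neg z ▸ abs_nonneg z
  exact mem_iUnion.2 ⟨_, _, MA_mem_Tset_compl hp hz hz0, MA_MA z⟩

lemma mem_posPHull_signedPairs_of_sum_rpow_le_one {x : Fin d → ℝ} (hx : ∑ j, |x j| ^ p ≤ 1) :
    x ∈ posPHull p (signedPairs d) := by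
  refine ⟨d, fun m => |x m|, fun m => Pi.single m (SignType.sign (x m) : ℝ),
    fun m => abs_nonneg _, hx, fun m => single_mem_signedPairs m ?_, ?_⟩
  · rcases SignType.sign (x m) with _ | _ | _ <;> simp
  · conv_lhs => rw [← Finset.univ_sum_single x]
    refine Finset.sum_congr rfl fun m _ => ?_
    rw [← Pi.single_smul', smul_eq_mul, mul_comm, sign_mul_abs]

end

/-- the union `C_{(p)} = ⋃_A C_A` is absolutely `p`-convex, contains
the `ℓ_p` unit ball and is contained in the `ℓ_∞` unit ball. -/
theorem Cp_absolutely_pConvex (d : ℕ) (p : ℝ) (hp : 0 < p) (hp1 : p ≤ 1) :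
    (∀ x ∈ Cp p d, ∀ y ∈ Cp p d, ∀ a b : ℝ,
      |a| ^ p + |b| ^ p ≤ 1 → a • x + b • y ∈ Cp p d) ∧
    { x : Fin d → ℝ | (∑ j, |x j| ^ p) ≤ 1 } ⊆ Cp p d ∧
    Cp p d ⊆ { x : Fin d → ℝ | ∀ j, |x j| ≤ 1 } := by
  rw [Cp_eq_posPHull_signedPairs hp.le]
  exact ⟨fun x hx y hy a b hab =>
      smul_add_smul_mem_posPHull_of_neg_mem (fun _ => neg_mem_signedPairs) hx hy hab,
    fun x hx => mem_posPHull_signedPairs_of_sum_rpow_le_one hx,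
    fun x hx => abs_apply_le_one_of_mem_posPHull hp hp1
      (fun _ => abs_apply_le_one_of_mem_signedPairs) hx⟩
end

section
/- Let (S, d) be a closed subset of an ℝ-tree T containing the base point 0, and suppose S has length measure (one-dimensional Hausdorff measure) zero. For s ∈ S let L_S(s) = inf { d(s,x) : x ∈ [0,s) ∩ S } and S₊ = { s ∈ S : L_S(s) > 0 }. Then for every y ∈ S and every x ∈ [0,y] ∩ S, d(x,y) = Σ_{z ∈ (x,y] ∩ S₊} L_S(z). -/
/-!
Pull `S` back along the arc-length parametrisation of `[o, y]` to a closed Lebesgue-null set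
`A ⊆ [0, d(o, y)]`. The value of `L` at the point of parameter `u` is the length
`u - sup (A ∩ [0, u))` of the gap of `A` ending at `u`. These gaps are pairwise disjoint open
intervals which, as `A` is null, cover `(t₀, d(o, y)]` up to a null set, so their lengths sum
to `d(o, y) - t₀ = d(x, y)`.
-/

open MeasureTheory Set

noncomputable def supBelow (A : Set ℝ) (u : ℝ) : ℝ := sSup (A ∩ Iio u)

section supBelow

variable {A : Set ℝ} {u v : ℝ}

lemma le_supBelow (hv : v ∈ A) (hvu : v < u) : v ≤ supBelow A u :=
  le_csSup (bddAbove_Iio.mono inter_subset_right) ⟨hv, hvu⟩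

lemma supBelow_le (hv : v ∈ A) (hvu : v < u) : supBelow A u ≤ u :=
  csSup_le ⟨v, hv, hvu⟩ fun _ h => h.2.le

lemma supBelow_mem (hA : IsClosed A) (hv : v ∈ A) (hvu : v < u) : supBelow A u ∈ A :=
  closure_minimal inter_subset_left hA
    (csSup_mem_closure ⟨v, hv, hvu⟩ (bddAbove_Iio.mono inter_subset_right))

lemma pairwiseDisjoint_Ioo_supBelow (A : Set ℝ) :
    A.PairwiseDisjoint fun u => Ioo (supBelow A u) u := by
  have key : ∀ u ∈ A, ∀ v, u < v → Disjoint (Ioo (supBelow A u) u) (Ioo (supBelow A v) v) :=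
    fun u hu v huv => disjoint_left.2 fun w hwu hwv =>
      lt_asymm (hwu.2.trans_le (le_supBelow hu huv)) hwv.1
  intro u hu v hv huv
  rcases huv.lt_or_gt with h | h
  · exact key u hu v h
  · exact (key v hv u h).symm

lemma Ioc_diff_subset_biUnion_gaps (hA : IsClosed A) {a b : ℝ} (ha : a ∈ A) (hb : b ∈ A) :
    Ioc a b \ A ⊆ ⋃ u ∈ {u | u ∈ A ∩ Ioc a b ∧ supBelow A u < u}, Ioo (supBelow A u) u := by
  rintro w ⟨⟨haw, hwb⟩, hwA⟩
  have hne : (A ∩ Ici w).Nonempty := ⟨b, hb, hwb⟩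
  have hbdd : BddBelow (A ∩ Ici w) := ⟨w, fun _ h => h.2⟩
  -- `w` lies in the gap ending at the first point of `A` after `w`
  set u := sInf (A ∩ Ici w)
  obtain ⟨huA, hwu⟩ : u ∈ A ∩ Ici w := (hA.inter isClosed_Ici).csInf_mem hne hbdd
  have hwu : w < u := lt_of_le_of_ne hwu fun h => hwA (h ▸ huA)
  have hau : a < u := haw.trans hwu
  have hsup : supBelow A u < w := by
    refine lt_of_le_of_ne (csSup_le ⟨a, ha, hau⟩ fun v hv => ?_) fun h =>
      hwA (h ▸ supBelow_mem hA ha hau)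
    by_contra! hwv
    exact (csInf_le hbdd ⟨hv.1, hwv.le⟩).not_gt hv.2
  exact mem_biUnion ⟨⟨huA, hau, csInf_le hbdd ⟨hb, hwb⟩⟩, hsup.trans hwu⟩ ⟨hsup, hwu⟩

theorem sub_eq_tsum_gaps (hA : IsClosed A) (hA0 : volume A = 0) {a b : ℝ} (ha : a ∈ A)
    (hb : b ∈ A) (hab : a ≤ b) :
    b - a = ∑' u : {u | u ∈ A ∩ Ioc a b ∧ supBelow A u < u}, ((u : ℝ) - supBelow A u) := by
  set G := {u | u ∈ A ∩ Ioc a b ∧ supBelow A u < u}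
  have hdisj : G.PairwiseDisjoint fun u => Ioo (supBelow A u) u :=
    (pairwiseDisjoint_Ioo_supBelow A).subset fun u hu => hu.1.1
  have hG : G.Countable := hdisj.countable_of_isOpen (fun _ _ => isOpen_Ioo)
    fun u hu => nonempty_Ioo.2 hu.2
  have hcover : ⋃ u ∈ G, Ioo (supBelow A u) u ⊆ Ioc a b := iUnion₂_subset fun u hu w hw =>
    ⟨(le_supBelow ha hu.1.2.1).trans_lt hw.1, hw.2.le.trans hu.1.2.2⟩
  have hvol : volume (Ioc a b) = ∑' u : G, volume (Ioo (supBelow A u) u) := by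
    rw [← measure_biUnion hG hdisj fun _ _ => measurableSet_Ioo]
    refine le_antisymm ?_ (measure_mono hcover)
    rw [← measure_sdiff_null hA0]
    exact measure_mono (Ioc_diff_subset_biUnion_gaps hA ha hb)
  simp only [Real.volume_Ioc, Real.volume_Ioo] at hvol
  have := congrArg ENNReal.toReal hvol
  rw [ENNReal.toReal_ofReal (sub_nonneg.2 hab),
    ENNReal.tsum_toReal_eq fun _ => ENNReal.ofReal_ne_top] at this
  rw [this]
  exact tsum_congr fun u => ENNReal.toReal_ofReal (sub_nonneg.2 u.2.2.le)

end supBelow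

structure IsGeodesicSegments {T : Type*} [MetricSpace T] (φ : T → T → ℝ → T) : Prop where
  map_zero : ∀ a b, φ a b 0 = a
  map_dist : ∀ a b, φ a b (dist a b) = b
  dist_map : ∀ a b, ∀ s ∈ Icc (0 : ℝ) (dist a b), ∀ t ∈ Icc (0 : ℝ) (dist a b),
    dist (φ a b s) (φ a b t) = |s - t|
  eq_of_isometric : ∀ a b (ψ : ℝ → T), ψ 0 = a → ψ (dist a b) = b →
    (∀ s ∈ Icc (0 : ℝ) (dist a b), ∀ t ∈ Icc (0 : ℝ) (dist a b), dist (ψ s) (ψ t) = |s - t|) →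
    ∀ s ∈ Icc (0 : ℝ) (dist a b), ψ s = φ a b s

namespace IsGeodesicSegments

variable {T : Type*} [MetricSpace T] {φ : T → T → ℝ → T} {a b : T} {s t : ℝ}

lemma dist_map_of_le (hφ : IsGeodesicSegments φ) (hs : s ∈ Icc 0 (dist a b))
    (ht : t ∈ Icc 0 (dist a b)) (hst : s ≤ t) : dist (φ a b s) (φ a b t) = t - s := by
  rw [hφ.dist_map a b s hs t ht, abs_of_nonpos (sub_nonpos.2 hst), neg_sub]

lemma dist_left_map (hφ : IsGeodesicSegments φ) (hs : s ∈ Icc 0 (dist a b)) :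
    dist a (φ a b s) = s := by
  simpa [hφ.map_zero] using hφ.dist_map_of_le ⟨le_rfl, dist_nonneg⟩ hs hs.1

lemma injOn (hφ : IsGeodesicSegments φ) : InjOn (φ a b) (Icc 0 (dist a b)) := by
  intro s hs t ht h
  have := hφ.dist_map a b s hs t ht
  rwa [h, dist_self, eq_comm, abs_eq_zero, sub_eq_zero] at this

lemma lipschitzOnWith (hφ : IsGeodesicSegments φ) :
    LipschitzOnWith 1 (φ a b) (Icc 0 (dist a b)) :=
  LipschitzOnWith.of_dist_le_mul fun s hs t ht => by
    rw [hφ.dist_map a b s hs t ht, NNReal.coe_one, one_mul, Real.dist_eq]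

lemma eqOn_subsegment (hφ : IsGeodesicSegments φ) {t₀ t₁ : ℝ} (h₀ : 0 ≤ t₀) (h₀₁ : t₀ ≤ t₁)
    (h₁ : t₁ ≤ dist a b) :
    EqOn (φ (φ a b t₀) (φ a b t₁)) (fun s => φ a b (t₀ + s)) (Icc 0 (t₁ - t₀)) := by
  have hd : dist (φ a b t₀) (φ a b t₁) = t₁ - t₀ :=
    hφ.dist_map_of_le ⟨h₀, h₀₁.trans h₁⟩ ⟨h₀.trans h₀₁, h₁⟩ h₀₁
  have hmem : ∀ s ∈ Icc 0 (t₁ - t₀), t₀ + s ∈ Icc 0 (dist a b) := fun s hs =>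
    ⟨by linarith [hs.1], by linarith [hs.2]⟩
  intro s hs
  rw [← hd] at hs
  refine (hφ.eq_of_isometric _ _ (fun s => φ a b (t₀ + s)) (by simp) (by simp [hd]) ?_ s hs).symm
  intro s hs t ht
  rw [hd] at hs ht
  rw [hφ.dist_map a b _ (hmem s hs) _ (hmem t ht), add_sub_add_left_eq_sub]

lemma image_segment_from_mem_sdiff (hφ : IsGeodesicSegments φ) {t₀ : ℝ}
    (ht₀ : t₀ ∈ Icc 0 (dist a b)) :
    φ (φ a b t₀) b '' Icc 0 (dist (φ a b t₀) b) \ {φ a b t₀} = φ a b '' Ioc t₀ (dist a b) := by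
  have hseg := (hφ.eqOn_subsegment ht₀.1 ht₀.2 le_rfl).image_eq
  have hd := hφ.dist_map_of_le ht₀ ⟨dist_nonneg, le_rfl⟩ ht₀.2
  rw [hφ.map_dist] at hseg hd
  rw [hd, hseg, ← image_image (φ a b) (t₀ + ·), image_const_add_Icc, add_zero, add_sub_cancel,
    ← image_singleton, ← (hφ.injOn.mono (Icc_subset_Icc_left ht₀.1)).image_sdiff_subset
      (singleton_subset_iff.2 ⟨le_rfl, ht₀.2⟩), Icc_sdiff_left]

lemma sInf_dist_initialSegment (hφ : IsGeodesicSegments φ) {S : Set T} {o y : T} (ho : o ∈ S)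
    {u : ℝ} (hu : u ∈ Ioc 0 (dist o y)) :
    sInf (dist (φ o y u) '' (φ o (φ o y u) '' Ico 0 (dist o (φ o y u)) ∩ S)) =
      u - supBelow (Icc 0 (dist o y) ∩ φ o y ⁻¹' S) u := by
  set A := Icc 0 (dist o y) ∩ φ o y ⁻¹' S
  have hu' : u ∈ Icc 0 (dist o y) := Ioc_subset_Icc_self hu
  have hinit : φ o (φ o y u) '' Ico 0 u = φ o y '' Ico 0 u := by
    have hsub : Ico 0 u ⊆ Icc 0 (u - 0) := fun s hs => ⟨hs.1, by linarith [hs.2]⟩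
    simpa only [hφ.map_zero, zero_add] using
      ((hφ.eqOn_subsegment le_rfl hu'.1 hu'.2).mono hsub).image_eq
  have hA : Ico 0 u ∩ φ o y ⁻¹' S = A ∩ Iio u := by
    ext s
    simp only [A, mem_inter_iff, mem_Ico, mem_Icc, mem_Iio, mem_preimage]
    constructor
    · rintro ⟨⟨h0, hsu⟩, hS⟩
      exact ⟨⟨⟨h0, hsu.le.trans hu'.2⟩, hS⟩, hsu⟩
    · rintro ⟨⟨⟨h0, -⟩, hS⟩, hsu⟩
      exact ⟨⟨h0, hsu⟩, hS⟩
  have hdist : dist (φ o y u) '' (φ o y '' (A ∩ Iio u)) = (u - ·) '' (A ∩ Iio u) := by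
    rw [image_image]
    refine image_congr fun s hs => ?_
    rw [dist_comm, hφ.dist_map_of_le hs.1.1 hu' hs.2.le]
  rw [hφ.dist_left_map hu', hinit, ← image_inter_preimage, hA, hdist, ← singleton_sub,
    csInf_sub (singleton_nonempty u) bddBelow_singleton
    (⟨0, ⟨⟨le_rfl, dist_nonneg⟩, ?_⟩, hu.1⟩ : (A ∩ Iio u).Nonempty)
    (bddAbove_Iio.mono inter_subset_right), csInf_singleton, supBelow]
  simpa [hφ.map_zero] using ho

lemma volume_preimage_eq_zero (hφ : IsGeodesicSegments φ) [MeasurableSpace T] [BorelSpace T]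
    {S : Set T} (hS : μH[1] S = 0) (o y : T) : volume (Icc 0 (dist o y) ∩ φ o y ⁻¹' S) = 0 := by
  have hsub : Icc 0 (dist o y) ∩ φ o y ⁻¹' S ⊆ dist o '' S := fun t ht =>
    ⟨φ o y t, ht.2, hφ.dist_left_map ht.1⟩
  rw [← hausdorffMeasure_real]
  refine measure_mono_null hsub (le_antisymm ?_ zero_le)
  simpa [hS] using (LipschitzWith.dist_right o).hausdorffMeasure_image_le zero_le_one S

end IsGeodesicSegments

theorem rTree_dist_eq_tsum_gaps_general {T : Type*} [MetricSpace T]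
    [MeasurableSpace T] [BorelSpace T]
    (φ : T → T → ℝ → T)
    (hφ0 : ∀ a b, φ a b 0 = a)
    (hφ1 : ∀ a b, φ a b (dist a b) = b)
    (hφiso : ∀ a b, ∀ s ∈ Set.Icc (0 : ℝ) (dist a b), ∀ t ∈ Set.Icc (0 : ℝ) (dist a b),
      dist (φ a b s) (φ a b t) = |s - t|)
    (hφuniq : ∀ a b (ψ : ℝ → T), ψ 0 = a → ψ (dist a b) = b →
      (∀ s ∈ Set.Icc (0 : ℝ) (dist a b), ∀ t ∈ Set.Icc (0 : ℝ) (dist a b),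
        dist (ψ s) (ψ t) = |s - t|) →
      ∀ s ∈ Set.Icc (0 : ℝ) (dist a b), ψ s = φ a b s)
    (S : Set T) (hScl : IsClosed S) (o : T) (ho : o ∈ S)
    (hmeas : μH[1] S = 0)
    (L : T → ℝ)
    (hL : ∀ s, L s = sInf (dist s '' ((φ o s '' Set.Ico 0 (dist o s)) ∩ S)))
    (y : T) (hy : y ∈ S)
    (x : T) (hx : x ∈ (φ o y '' Set.Icc 0 (dist o y)) ∩ S) :
    dist x y = ∑' z : (((φ x y '' Set.Icc 0 (dist x y)) \ {x}) ∩ { s ∈ S | 0 < L s } : Set T),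
      L (z : T) := by
  have hφ : IsGeodesicSegments φ := ⟨hφ0, hφ1, hφiso, hφuniq⟩
  obtain ⟨⟨t₀, ht₀, rfl⟩, hxS⟩ := hx
  set A := Icc 0 (dist o y) ∩ φ o y ⁻¹' S
  have hAcl : IsClosed A :=
    hφ.lipschitzOnWith.continuousOn.preimage_isClosed_of_isClosed isClosed_Icc hScl
  have hLA : ∀ u ∈ Ioc t₀ (dist o y), L (φ o y u) = u - supBelow A u := fun u hu => by
    rw [hL, hφ.sInf_dist_initialSegment ho ⟨ht₀.1.trans_lt hu.1, hu.2⟩]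
  have hgaps : (φ (φ o y t₀) y '' Icc 0 (dist (φ o y t₀) y) \ {φ o y t₀}) ∩ {s ∈ S | 0 < L s} =
      φ o y '' {u | u ∈ A ∩ Ioc t₀ (dist o y) ∧ supBelow A u < u} := by
    rw [hφ.image_segment_from_mem_sdiff ht₀, ← image_inter_preimage]
    congr 1 with u
    simp only [A, mem_inter_iff, mem_ofPred_eq, mem_preimage]
    constructor
    · rintro ⟨hu, hS, hLpos⟩
      exact ⟨⟨⟨⟨ht₀.1.trans hu.1.le, hu.2⟩, hS⟩, hu⟩, sub_pos.1 (hLA u hu ▸ hLpos)⟩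
    · rintro ⟨⟨⟨-, hS⟩, hu⟩, hgap⟩
      exact ⟨hu, hS, hLA u hu ▸ sub_pos.2 hgap⟩
  have hdist : dist (φ o y t₀) y = dist o y - t₀ := by
    simpa only [hφ1] using hφ.dist_map_of_le ht₀ ⟨dist_nonneg, le_rfl⟩ ht₀.2
  rw [hgaps, tsum_image _ (hφ.injOn.mono fun u hu => hu.1.1.1), hdist,
    sub_eq_tsum_gaps hAcl (hφ.volume_preimage_eq_zero hmeas o y) ⟨ht₀, hxS⟩
      ⟨⟨dist_nonneg, le_rfl⟩, by rwa [mem_preimage, hφ1]⟩ ht₀.2]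
  exact tsum_congr fun u => (hLA u u.2.1.2).symm

/-- let `S` be a closed subset of an `ℝ`-tree `T` (with segment
parametrisations `φ a b : [0, d(a,b)] → T`, unique and capturing all injective
continuous paths), containing the base point `o`, and of `1`-dimensional Hausdorff
measure zero. With `L(s) = inf { d(s,x) : x ∈ [o,s) ∩ S }` and
`S₊ = { s ∈ S : L(s) > 0 }`, for every `y ∈ S` and `x ∈ [o,y] ∩ S` one has
`d(x,y) = ∑_{z ∈ (x,y] ∩ S₊} L(z)`. -/
theorem rTree_dist_eq_tsum_gaps {T : Type*} [MetricSpace T]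
    [MeasurableSpace T] [BorelSpace T]
    (φ : T → T → ℝ → T)
    (hφ0 : ∀ a b, φ a b 0 = a)
    (hφ1 : ∀ a b, φ a b (dist a b) = b)
    (hφiso : ∀ a b, ∀ s ∈ Set.Icc (0 : ℝ) (dist a b), ∀ t ∈ Set.Icc (0 : ℝ) (dist a b),
      dist (φ a b s) (φ a b t) = |s - t|)
    (hφuniq : ∀ a b (ψ : ℝ → T), ψ 0 = a → ψ (dist a b) = b →
      (∀ s ∈ Set.Icc (0 : ℝ) (dist a b), ∀ t ∈ Set.Icc (0 : ℝ) (dist a b),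
        dist (ψ s) (ψ t) = |s - t|) →
      ∀ s ∈ Set.Icc (0 : ℝ) (dist a b), ψ s = φ a b s)
    (harc : ∀ g : ℝ → T, ContinuousOn g (Set.Icc (0 : ℝ) 1) →
      Set.InjOn g (Set.Icc (0 : ℝ) 1) →
      g '' Set.Icc (0 : ℝ) 1 = φ (g 0) (g 1) '' Set.Icc 0 (dist (g 0) (g 1)))
    (S : Set T) (hScl : IsClosed S) (o : T) (ho : o ∈ S)
    (hmeas : μH[1] S = 0)
    (L : T → ℝ)
    (hL : ∀ s, L s = sInf (dist s '' ((φ o s '' Set.Ico 0 (dist o s)) ∩ S)))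
    (y : T) (hy : y ∈ S)
    (x : T) (hx : x ∈ (φ o y '' Set.Icc 0 (dist o y)) ∩ S) :
    dist x y = ∑' z : (((φ x y '' Set.Icc 0 (dist x y)) \ {x}) ∩ { s ∈ S | 0 < L s } : Set T),
      L (z : T) :=
  rTree_dist_eq_tsum_gaps_general φ hφ0 hφ1 hφiso hφuniq S hScl o ho hmeas L hL y hy x hx
end

section
/- Let S ⊆ ℝ be a closed set of Lebesgue measure zero with min S = 0, contained in [0, y] for some y ∈ S, and let x ∈ S with 0 ≤ x ≤ y. Write (x,y) \ S = ⋃_{i ∈ I} (aᵢ, bᵢ) as a disjoint union of open intervals. Then y − x = Σ_{i ∈ I} (bᵢ − aᵢ), each bᵢ belongs to S₊ := { s ∈ S : the gap inf{ s − t : t ∈ S, t < s } is positive }, the predecessor of bᵢ in S is aᵢ, and the map i ↦ bᵢ is a bijection from I onto S₊ ∩ (x, y]. -/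
/-!
The gaps `(aᵢ, bᵢ)` fill `(x, y)` up to the null set `S`, so their lengths add up to `y - x`.
Disjointness of the gaps forces their endpoints out of every gap, hence into `S`; since `S`
misses `(aᵢ, bᵢ)`, `aᵢ` is the largest point of `S` below `bᵢ`. Conversely, if `s ∈ (x, y]` has
positive gap in `S`, the midpoint between `s` and its predecessor lies in a gap, whose right
endpoint can only be `s`.
-/

open Set MeasureTheory

section DisjointIoo

variable {ι : Type*} {a b : ι → ℝ}

theorem eq_of_max_lt_min_of_pairwise_disjoint_Ioo
    (hdisj : Pairwise (Function.onFun Disjoint fun i => Ioo (a i) (b i))) {i j : ι}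
    (h : max (a i) (a j) < min (b i) (b j)) : i = j :=
  by_contra fun hij => (Ioo_disjoint_Ioo.mp (hdisj hij)).not_gt h

theorem injective_right_of_pairwise_disjoint_Ioo (hab : ∀ i, a i < b i)
    (hdisj : Pairwise (Function.onFun Disjoint fun i => Ioo (a i) (b i))) :
    Function.Injective b := fun i j hb =>
  eq_of_max_lt_min_of_pairwise_disjoint_Ioo hdisj <| by
    rw [hb, min_self]; exact max_lt (hb ▸ hab i) (hab j)

theorem right_notMem_Ioo_of_pairwise_disjoint (hab : ∀ i, a i < b i)
    (hdisj : Pairwise (Function.onFun Disjoint fun i => Ioo (a i) (b i))) (i j : ι) :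
    b i ∉ Ioo (a j) (b j) := fun h => by
  obtain rfl : i = j := eq_of_max_lt_min_of_pairwise_disjoint_Ioo hdisj <| by
    rw [min_eq_left h.2.le]; exact max_lt (hab i) h.1
  exact lt_irrefl _ h.2

theorem left_notMem_Ioo_of_pairwise_disjoint (hab : ∀ i, a i < b i)
    (hdisj : Pairwise (Function.onFun Disjoint fun i => Ioo (a i) (b i))) (i j : ι) :
    a i ∉ Ioo (a j) (b j) := fun h => by
  obtain rfl : i = j := eq_of_max_lt_min_of_pairwise_disjoint_Ioo hdisj <| by
    rw [max_eq_left h.1.le]; exact lt_min (hab i) h.2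
  exact lt_irrefl _ h.1

theorem hasSum_sub_of_volume_iUnion_Ioo (hab : ∀ i, a i < b i)
    (hdisj : Pairwise (Function.onFun Disjoint fun i => Ioo (a i) (b i))) {L : ℝ} (hL : 0 ≤ L)
    (hvol : volume (⋃ i, Ioo (a i) (b i)) = ENNReal.ofReal L) :
    HasSum (fun i => b i - a i) L := by
  have : Countable ι :=
    hdisj.countable_of_isOpen_disjoint (fun _ => isOpen_Ioo) fun i => nonempty_Ioo.2 (hab i)
  have htsum : ∑' i, ENNReal.ofReal (b i - a i) = ENNReal.ofReal L := by
    simpa [measure_iUnion hdisj fun _ => measurableSet_Ioo] using hvol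
  have := ENNReal.hasSum_toReal (htsum ▸ ENNReal.ofReal_ne_top)
  rwa [← ENNReal.tsum_toReal_eq fun _ => ENNReal.ofReal_ne_top, htsum, ENNReal.toReal_ofReal hL,
    funext fun i => ENNReal.toReal_ofReal (sub_nonneg.2 (hab i).le)] at this

end DisjointIoo

section GapDecomposition

variable {S : Set ℝ} {x y : ℝ} {ι : Type*} {a b : ι → ℝ}

theorem Ioo_subset_diff_of_iUnion_eq (hcover : Ioo x y \ S = ⋃ i, Ioo (a i) (b i)) (i : ι) :
    Ioo (a i) (b i) ⊆ Ioo x y \ S :=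
  hcover ▸ subset_iUnion (fun i => Ioo (a i) (b i)) i

theorem Icc_subset_Icc_of_iUnion_eq (hab : ∀ i, a i < b i)
    (hcover : Ioo x y \ S = ⋃ i, Ioo (a i) (b i)) (i : ι) : Icc (a i) (b i) ⊆ Icc x y :=
  (Icc_subset_Icc_iff (hab i).le).2 <|
    (Ioo_subset_Ioo_iff (hab i)).1 ((Ioo_subset_diff_of_iUnion_eq hcover i).trans sdiff_subset)

theorem mem_of_mem_Icc_of_forall_notMem_Ioo (hx : x ∈ S) (hy : y ∈ S)
    (hcover : Ioo x y \ S = ⋃ i, Ioo (a i) (b i)) {t : ℝ} (ht : t ∈ Icc x y)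
    (hgap : ∀ i, t ∉ Ioo (a i) (b i)) : t ∈ S := by
  rcases eq_endpoints_or_mem_Ioo_of_mem_Icc ht with rfl | rfl | hxy
  · exact hx
  · exact hy
  · by_contra hS
    have : t ∈ ⋃ i, Ioo (a i) (b i) := hcover ▸ ⟨hxy, hS⟩
    exact (mem_iUnion.1 this).elim hgap

theorem right_mem_of_iUnion_eq (hab : ∀ i, a i < b i)
    (hdisj : Pairwise (Function.onFun Disjoint fun i => Ioo (a i) (b i))) (hx : x ∈ S)
    (hy : y ∈ S) (hcover : Ioo x y \ S = ⋃ i, Ioo (a i) (b i)) (i : ι) : b i ∈ S :=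
  mem_of_mem_Icc_of_forall_notMem_Ioo hx hy hcover
    (Icc_subset_Icc_of_iUnion_eq hab hcover i (right_mem_Icc.2 (hab i).le))
    (right_notMem_Ioo_of_pairwise_disjoint hab hdisj i)

theorem left_mem_of_iUnion_eq (hab : ∀ i, a i < b i)
    (hdisj : Pairwise (Function.onFun Disjoint fun i => Ioo (a i) (b i))) (hx : x ∈ S)
    (hy : y ∈ S) (hcover : Ioo x y \ S = ⋃ i, Ioo (a i) (b i)) (i : ι) : a i ∈ S :=
  mem_of_mem_Icc_of_forall_notMem_Ioo hx hy hcover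
    (Icc_subset_Icc_of_iUnion_eq hab hcover i (left_mem_Icc.2 (hab i).le))
    (left_notMem_Ioo_of_pairwise_disjoint hab hdisj i)

theorem isGreatest_left_of_iUnion_eq (hab : ∀ i, a i < b i)
    (hdisj : Pairwise (Function.onFun Disjoint fun i => Ioo (a i) (b i))) (hx : x ∈ S)
    (hy : y ∈ S) (hcover : Ioo x y \ S = ⋃ i, Ioo (a i) (b i)) (i : ι) :
    IsGreatest {t ∈ S | t < b i} (a i) :=
  ⟨⟨left_mem_of_iUnion_eq hab hdisj hx hy hcover i, hab i⟩, fun _ ⟨ht, htb⟩ =>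
    not_lt.1 fun hat => (Ioo_subset_diff_of_iUnion_eq hcover i ⟨hat, htb⟩).2 ht⟩

theorem exists_right_eq_of_sSup_lt (hab : ∀ i, a i < b i)
    (hdisj : Pairwise (Function.onFun Disjoint fun i => Ioo (a i) (b i))) (hx : x ∈ S)
    (hy : y ∈ S) (hcover : Ioo x y \ S = ⋃ i, Ioo (a i) (b i)) {s : ℝ} (hs : s ∈ S)
    (hgap : sSup {t ∈ S | t < s} < s) (hxs : x < s) (hsy : s ≤ y) : ∃ i, b i = s := by
  set c := sSup {t ∈ S | t < s}
  have hbdd : BddAbove {t ∈ S | t < s} := ⟨s, fun t ht => ht.2.le⟩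
  have hxc : x ≤ c := le_csSup hbdd ⟨hx, hxs⟩
  have hmid : (c + s) / 2 ∈ Ioo x y \ S := by
    refine ⟨⟨by linarith, by linarith⟩, fun hmS => ?_⟩
    have : (c + s) / 2 ≤ c := le_csSup hbdd ⟨hmS, by linarith⟩
    linarith
  obtain ⟨i, hai, hib⟩ := mem_iUnion.1 (hcover ▸ hmid)
  have hbs : b i ≤ s := not_lt.1 fun hsb =>
    (Ioo_subset_diff_of_iUnion_eq hcover i ⟨by linarith, hsb⟩).2 hs
  have hsb : s ≤ b i := not_lt.1 fun hbs' => by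
    have : b i ≤ c := le_csSup hbdd ⟨right_mem_of_iUnion_eq hab hdisj hx hy hcover i, hbs'⟩
    linarith
  exact ⟨i, le_antisymm hbs hsb⟩

end GapDecomposition

theorem closed_measureZero_gap_decomposition_general (S : Set ℝ)
    (hmeas : MeasureTheory.volume S = 0)
    (y : ℝ) (hy : y ∈ S)
    (x : ℝ) (hx : x ∈ S) (hxy : x ≤ y)
    {ι : Type*} (a b : ι → ℝ) (hab : ∀ i, a i < b i)
    (hdisj : Pairwise (Function.onFun Disjoint fun i => Set.Ioo (a i) (b i)))
    (hcover : Set.Ioo x y \ S = ⋃ i, Set.Ioo (a i) (b i)) :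
    HasSum (fun i => b i - a i) (y - x) ∧
    (∀ i, b i ∈ S ∧ sSup { t ∈ S | t < b i } = a i ∧ a i ∈ S) ∧
    Function.Injective b ∧
    Set.range b = { s ∈ S | sSup { t ∈ S | t < s } < s } ∩ Set.Ioc x y := by
  have hvol : volume (⋃ i, Ioo (a i) (b i)) = ENNReal.ofReal (y - x) := by
    rw [← hcover, measure_sdiff_null hmeas, Real.volume_Ioo]
  have hpred := isGreatest_left_of_iUnion_eq hab hdisj hx hy hcover
  have hbS := right_mem_of_iUnion_eq hab hdisj hx hy hcover
  refine ⟨hasSum_sub_of_volume_iUnion_Ioo hab hdisj (sub_nonneg.2 hxy) hvol,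
    fun i => ⟨hbS i, (hpred i).csSup_eq, (hpred i).1.1⟩,
    injective_right_of_pairwise_disjoint_Ioo hab hdisj, ?_⟩
  ext s
  constructor
  · rintro ⟨i, rfl⟩
    have hsub := Icc_subset_Icc_of_iUnion_eq hab hcover i
    exact ⟨⟨hbS i, (hpred i).csSup_eq ▸ hab i⟩,
      (hsub (left_mem_Icc.2 (hab i).le)).1.trans_lt (hab i),
      (hsub (right_mem_Icc.2 (hab i).le)).2⟩
  · rintro ⟨⟨hs, hgap⟩, hxs, hsy⟩
    exact exists_right_eq_of_sSup_lt hab hdisj hx hy hcover hs hgap hxs hsy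

/-- let `S ⊆ ℝ` be closed, of Lebesgue measure zero, with least
element `0`, contained in `[0,y]` with `y ∈ S`, and `x ∈ S`, `x ≤ y`. If
`(x,y) \ S = ⋃ᵢ (aᵢ, bᵢ)` is a disjoint union of open intervals, then
`y − x = ∑ᵢ (bᵢ − aᵢ)`, each `bᵢ` has positive gap in `S` with predecessor `aᵢ`,
and `i ↦ bᵢ` is a bijection onto `S₊ ∩ (x,y]`. -/
theorem closed_measureZero_gap_decomposition (S : Set ℝ) (hScl : IsClosed S)
    (hmeas : MeasureTheory.volume S = 0) (hmin : IsLeast S 0)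
    (y : ℝ) (hy : y ∈ S) (hbound : S ⊆ Set.Icc 0 y)
    (x : ℝ) (hx : x ∈ S) (hxy : x ≤ y)
    {ι : Type*} (a b : ι → ℝ) (hab : ∀ i, a i < b i)
    (hdisj : Pairwise (Function.onFun Disjoint fun i => Set.Ioo (a i) (b i)))
    (hcover : Set.Ioo x y \ S = ⋃ i, Set.Ioo (a i) (b i)) :
    HasSum (fun i => b i - a i) (y - x) ∧
    (∀ i, b i ∈ S ∧ sSup { t ∈ S | t < b i } = a i ∧ a i ∈ S) ∧
    Function.Injective b ∧
    Set.range b = { s ∈ S | sSup { t ∈ S | t < s } < s } ∩ Set.Ioc x y :=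
  closed_measureZero_gap_decomposition_general S hmeas y hy x hx hxy a b hab hdisj hcover
end
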